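/- arXiv:1603.07510 — 4 statements merged into one kernel-verified Lean document; each statement's English description precedes it below -/
import Mathlib

section
/- In any lattice-ordered group (or Riesz space), defining b(x,y) = |x| ⊓ y⁺ − |x| ⊓ y⁻, one has |b(x,y)| = |x| ⊓ |y| for all x, y. -/
/-!
The two terms `|x| ⊓ y⁺` and `|x| ⊓ y⁻` of `b(x,y)` are disjoint, since `y⁺ ⊓ y⁻ = 0`. For disjoint
`u, v` one has `|u - v| = u ⊔ v`, and distributivity gives
`|x| ⊓ y⁺ ⊔ |x| ⊓ y⁻ = |x| ⊓ (y⁺ ⊔ y⁻) = |x| ⊓ |y|`.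
-/

/-- Lacey's function `b(x,y) = |x| ⊓ y⁺ − |x| ⊓ y⁻` in a lattice-ordered group. -/
def bLacey {α : Type*} [Lattice α] [AddCommGroup α] (x y : α) : α :=
  |x| ⊓ (y ⊔ 0) - |x| ⊓ ((-y) ⊔ 0)

lemma inf_inf_inf_eq_zero_of_nonneg {α : Type*} [Lattice α] [Zero α] {a u v : α} (ha : 0 ≤ a)
    (h : u ⊓ v = 0) : (a ⊓ u) ⊓ (a ⊓ v) = 0 := by
  rw [← inf_inf_distrib_left, h, inf_eq_right.mpr ha]

section Disjoint

variable {α : Type*} [Lattice α] [AddCommGroup α] [AddLeftMono α]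

lemma abs_sub_eq_sup_of_inf_eq_zero {u v : α} (h : u ⊓ v = 0) : |u - v| = u ⊔ v := by
  rw [← sup_sub_inf_eq_abs_sub v u, inf_comm, h, sup_comm, sub_zero]

lemma sup_eq_add_of_inf_eq_zero {u v : α} (h : u ⊓ v = 0) : u ⊔ v = u + v := by
  rw [← inf_add_sup u v, h, zero_add]

lemma posPart_sup_negPart (y : α) : y⁺ ⊔ y⁻ = |y| := by
  rw [sup_eq_add_of_inf_eq_zero (posPart_inf_negPart_eq_zero y), posPart_add_negPart]

end Disjoint

/-- In any lattice-ordered group, `|b(x,y)| = |x| ⊓ |y|`. -/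
theorem stmt2 {α : Type*} [Lattice α] [AddCommGroup α]
    [CovariantClass α α (· + ·) (· ≤ ·)] (x y : α) :
    |bLacey x y| = |x| ⊓ |y| := by
  let := AddCommGroup.toDistribLattice α
  have hdisj : (|x| ⊓ y⁺) ⊓ (|x| ⊓ y⁻) = 0 :=
    inf_inf_inf_eq_zero_of_nonneg (abs_nonneg x) (posPart_inf_negPart_eq_zero y)
  calc |bLacey x y| = |x| ⊓ y⁺ ⊔ |x| ⊓ y⁻ := abs_sub_eq_sup_of_inf_eq_zero hdisj
    _ = |x| ⊓ |y| := by rw [← inf_sup_left, posPart_sup_negPart]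
end

section
/- Let r > 2 and let X be a Banach function space over a measure space that is exactly r-convex and has strictly monotone norm (0 ≤ u ≤ v and ‖u‖ = ‖v‖ imply u = v). If x, y ∈ X satisfy ‖x + ty‖^r + ‖x − ty‖^r ≤ 2(‖x‖^r + t^r‖y‖^r) for all t ∈ [0,1], then x and y are disjoint: |x| ⊓ |y| = 0. -/
/-!
Suppose `x` and `y` are both nonzero at some point, and pick `0 ≤ k ≤ |x|`, `k ≠ 0`, below
`√(x² + y²) - |x|`. Concavity of `s ↦ √(x² + s y²)` gives `|x| + s k ≤ √(x² + s y²)` on `[0,1]`.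
The map `s ↦ ‖|x| + s k‖` is convex and, by strict monotonicity, strictly smaller at `s = -1` than
at `s = 0`, so it grows at least linearly: `‖x‖ + s c ≤ ‖√(x² + s y²)‖` with `c > 0`.
Exact `r`-convexity with `r ≥ 2` gives the Clarkson-type bound
`2‖√(x² + t²y²)‖^r ≤ ‖x + ty‖^r + ‖x - ty‖^r`, so the hypothesis on `x, y` forces
`(‖x‖ + t²c)^r ≤ ‖x‖^r + t^r‖y‖^r`. The left side exceeds `‖x‖^r` by order `t²` and the right side
by order `t^r`, which is impossible for small `t` since `r > 2`.
-/

open Filter Topology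

lemma rpow_eq_sq_rpow_half {z : ℝ} (hz : 0 ≤ z) (r : ℝ) : z ^ r = (z ^ 2) ^ (r / 2) := by
  rw [← Real.rpow_natCast, ← Real.rpow_mul hz]
  ring_nf

lemma two_mul_sqrt_sq_add_sq_rpow_le {r : ℝ} (hr : 2 ≤ r) (a b : ℝ) :
    2 * √(a ^ 2 + b ^ 2) ^ r ≤ |a + b| ^ r + |a - b| ^ r := by
  have hmid : 1 / 2 * |a + b| ^ 2 + 1 / 2 * |a - b| ^ 2 = √(a ^ 2 + b ^ 2) ^ 2 := by
    rw [Real.sq_sqrt (by positivity), sq_abs, sq_abs]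
    ring
  have h := (convexOn_rpow (p := r / 2) (by linarith)).2 (Set.mem_Ici.2 (sq_nonneg |a + b|))
    (Set.mem_Ici.2 (sq_nonneg |a - b|)) (by norm_num : (0 : ℝ) ≤ 1 / 2)
    (by norm_num : (0 : ℝ) ≤ 1 / 2) (by norm_num)
  simp only [smul_eq_mul, hmid] at h
  rw [rpow_eq_sq_rpow_half (abs_nonneg (a + b)), rpow_eq_sq_rpow_half (abs_nonneg (a - b)),
    rpow_eq_sq_rpow_half (Real.sqrt_nonneg _)]
  linarith

lemma abs_add_mul_sqrt_sub_abs_le_sqrt (a b : ℝ) {s : ℝ} (hs₀ : 0 ≤ s) (hs₁ : s ≤ 1) :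
    |a| + s * (√(a ^ 2 + b ^ 2) - |a|) ≤ √(a ^ 2 + s * b ^ 2) := by
  have h := Real.strictConcaveOn_sqrt.concaveOn.2 (Set.mem_Ici.2 (sq_nonneg a))
    (Set.mem_Ici.2 (by positivity : 0 ≤ a ^ 2 + b ^ 2)) (sub_nonneg.2 hs₁) hs₀ (by ring)
  simp only [smul_eq_mul, Real.sqrt_sq_eq_abs] at h
  rw [show (1 - s) * a ^ 2 + s * (a ^ 2 + b ^ 2) = a ^ 2 + s * b ^ 2 by ring] at h
  linarith

lemma exists_rpow_add_lt_rpow_add_sq {r M c : ℝ} (hr : 2 < r) (hM : 0 < M) (hc : 0 < c) (K : ℝ) :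
    ∃ t, 0 < t ∧ t ≤ 1 ∧ M ^ r + t ^ r * K ^ r < (M + t ^ 2 * c) ^ r := by
  have hε : 0 < M ^ (r - 1) * c := mul_pos (Real.rpow_pos_of_pos hM _) hc
  have hlim : Tendsto (fun t : ℝ => t ^ (r - 2) * K ^ r) (𝓝[>] 0) (𝓝 0) := by
    have := ((Real.continuousAt_rpow_const 0 (r - 2) (Or.inr (by linarith))).tendsto.mul_const
      (K ^ r)).mono_left (nhdsWithin_le_nhds (s := Set.Ioi 0))
    rwa [Real.zero_rpow (by linarith), zero_mul] at this
  obtain ⟨t, hsmall, ht₀, ht₁⟩ := ((hlim.eventually (gt_mem_nhds hε)).and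
    (Ioc_mem_nhdsGT one_pos)).exists
  refine ⟨t, ht₀, ht₁, ?_⟩
  have hMt : 0 < M + t ^ 2 * c := by positivity
  calc M ^ r + t ^ r * K ^ r
      = M ^ r + t ^ 2 * (t ^ (r - 2) * K ^ r) := by
        rw [← mul_assoc, ← Real.rpow_natCast, ← Real.rpow_add ht₀]; norm_num
    _ < M ^ r + t ^ 2 * (M ^ (r - 1) * c) := by gcongr
    _ = M ^ (r - 1) * (M + t ^ 2 * c) := by
        rw [mul_add, ← Real.rpow_add_one hM.ne']; norm_num; ring
    _ ≤ (M + t ^ 2 * c) ^ (r - 1) * (M + t ^ 2 * c) := by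
        have : M ≤ M + t ^ 2 * c := le_add_of_nonneg_right (by positivity)
        gcongr
        linarith
    _ = (M + t ^ 2 * c) ^ r := by rw [← Real.rpow_add_one hMt.ne']; norm_num

lemma le_nrm_add_smul {α : Type*} {nrm : (α → ℝ) → ℝ}
    (hhom : ∀ (c : ℝ) (f : α → ℝ), nrm (c • f) = |c| * nrm f)
    (hadd : ∀ f g : α → ℝ, nrm (f + g) ≤ nrm f + nrm g) (u k : α → ℝ) {s : ℝ} (hs : 0 ≤ s) :
    nrm u + s * (nrm u - nrm (u - k)) ≤ nrm (u + s • k) := by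
  have h := hadd (u + s • k) (s • (u - k))
  rw [show u + s • k + s • (u - k) = (1 + s) • u by module, hhom, hhom,
    abs_of_nonneg (by linarith), abs_of_nonneg hs] at h
  linarith

lemma nrm_sub_lt {α : Type*} {nrm : (α → ℝ) → ℝ}
    (hmono : ∀ f g : α → ℝ, (∀ a, |f a| ≤ |g a|) → nrm f ≤ nrm g)
    (hstrict : ∀ u v : α → ℝ, (∀ a, 0 ≤ u a) → (∀ a, u a ≤ v a) → nrm u = nrm v → u = v)
    {u k : α → ℝ} (hk₀ : 0 ≤ k) (hku : k ≤ u) (hk : k ≠ 0) : nrm (u - k) < nrm u := by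
  have hle : ∀ a, 0 ≤ (u - k) a ∧ (u - k) a ≤ u a := fun a =>
    ⟨sub_nonneg.2 (hku a), sub_le_self _ (hk₀ a)⟩
  refine (hmono _ _ fun a => ?_).lt_of_ne fun heq => hk ?_
  · rw [abs_of_nonneg (hle a).1, abs_of_nonneg ((hle a).1.trans (hle a).2)]
    exact (hle a).2
  · simpa using hstrict _ _ (fun a => (hle a).1) (fun a => (hle a).2) heq

lemma nrm_abs {α : Type*} {nrm : (α → ℝ) → ℝ}
    (hmono : ∀ f g : α → ℝ, (∀ a, |f a| ≤ |g a|) → nrm f ≤ nrm g) (f : α → ℝ) :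
    nrm |f| = nrm f :=
  le_antisymm (hmono _ _ fun a => by simp) (hmono _ _ fun a => by simp)

lemma two_mul_nrm_sqrt_rpow_le {α : Type*} (X : Submodule ℝ (α → ℝ)) (nrm : (α → ℝ) → ℝ)
    {r : ℝ} (hr : 2 ≤ r) (hnonneg : ∀ f : α → ℝ, 0 ≤ nrm f)
    (hmono : ∀ f g : α → ℝ, (∀ a, |f a| ≤ |g a|) → nrm f ≤ nrm g)
    (hhom : ∀ (c : ℝ) (f : α → ℝ), nrm (c • f) = |c| * nrm f)
    (hconv : ∀ x ∈ X, ∀ y ∈ X,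
      nrm (fun a => (|x a| ^ r + |y a| ^ r) ^ r⁻¹) ≤ (nrm x ^ r + nrm y ^ r) ^ r⁻¹)
    {x y : α → ℝ} (hx : x ∈ X) (hy : y ∈ X) :
    2 * nrm (fun a => √(x a ^ 2 + y a ^ 2)) ^ r ≤ nrm (x + y) ^ r + nrm (x - y) ^ r := by
  set v : α → ℝ := fun a => √(x a ^ 2 + y a ^ 2)
  have hr₀ : r ≠ 0 := by positivity
  have hpt : ∀ a, |(2 : ℝ) ^ r⁻¹ * v a| ≤ |(|(x + y) a| ^ r + |(x - y) a| ^ r) ^ r⁻¹| := by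
    intro a
    rw [abs_of_nonneg (by positivity), abs_of_nonneg (by positivity)]
    calc (2 : ℝ) ^ r⁻¹ * v a = (2 * v a ^ r) ^ r⁻¹ := by
          rw [Real.mul_rpow (by norm_num) (by positivity), Real.rpow_rpow_inv (by positivity) hr₀]
      _ ≤ _ := Real.rpow_le_rpow (by positivity) (two_mul_sqrt_sq_add_sq_rpow_le hr _ _)
          (by positivity)
  have hroot : (2 : ℝ) ^ r⁻¹ * nrm v ≤ (nrm (x + y) ^ r + nrm (x - y) ^ r) ^ r⁻¹ :=
    calc (2 : ℝ) ^ r⁻¹ * nrm v = nrm ((2 : ℝ) ^ r⁻¹ • v) := by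
          rw [hhom, abs_of_pos (by positivity)]
      _ ≤ _ := hmono _ _ hpt
      _ ≤ _ := hconv _ (X.add_mem hx hy) _ (X.sub_mem hx hy)
  have hsum : 0 ≤ nrm (x + y) ^ r + nrm (x - y) ^ r :=
    add_nonneg (Real.rpow_nonneg (hnonneg _) _) (Real.rpow_nonneg (hnonneg _) _)
  calc 2 * nrm v ^ r = ((2 : ℝ) ^ r⁻¹ * nrm v) ^ r := by
        rw [Real.mul_rpow (by positivity) (hnonneg v), Real.rpow_inv_rpow (by norm_num) hr₀]
    _ ≤ ((nrm (x + y) ^ r + nrm (x - y) ^ r) ^ r⁻¹) ^ r :=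
        Real.rpow_le_rpow (mul_nonneg (by positivity) (hnonneg v)) hroot (by positivity)
    _ = _ := Real.rpow_inv_rpow hsum hr₀

lemma exists_nrm_add_mul_le_nrm_sqrt {α : Type*} {nrm : (α → ℝ) → ℝ}
    (hnonneg : ∀ f : α → ℝ, 0 ≤ nrm f)
    (hmono : ∀ f g : α → ℝ, (∀ a, |f a| ≤ |g a|) → nrm f ≤ nrm g)
    (hhom : ∀ (c : ℝ) (f : α → ℝ), nrm (c • f) = |c| * nrm f)
    (hadd : ∀ f g : α → ℝ, nrm (f + g) ≤ nrm f + nrm g)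
    (hstrict : ∀ u v : α → ℝ, (∀ a, 0 ≤ u a) → (∀ a, u a ≤ v a) → nrm u = nrm v → u = v)
    {x y : α → ℝ} {a₀ : α} (hx₀ : x a₀ ≠ 0) (hy₀ : y a₀ ≠ 0) :
    ∃ c ∈ Set.Ioc 0 (nrm x), ∀ s, 0 ≤ s → s ≤ 1 →
      nrm x + s * c ≤ nrm (fun a => √(x a ^ 2 + s * y a ^ 2)) := by
  set k : α → ℝ := fun a => min |x a| (√(x a ^ 2 + y a ^ 2) - |x a|)
  have hk₀ : 0 ≤ k := fun a => le_min (abs_nonneg _) <| sub_nonneg.2 <| by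
    rw [← Real.sqrt_sq_eq_abs]; gcongr; exact le_add_of_nonneg_right (sq_nonneg _)
  have hk : k ≠ 0 := fun h => (congrFun h a₀).not_gt <| lt_min (abs_pos.2 hx₀) <| sub_pos.2 <| by
    rw [← Real.sqrt_sq_eq_abs]; gcongr; exact lt_add_of_pos_right _ (by positivity)
  have hgap := nrm_sub_lt (u := |x|) hmono hstrict hk₀ (fun a => min_le_left _ _) hk
  rw [nrm_abs hmono] at hgap
  refine ⟨nrm x - nrm (|x| - k), ⟨by linarith, by linarith [hnonneg (|x| - k)]⟩,
    fun s hs₀ hs₁ => ?_⟩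
  calc nrm x + s * (nrm x - nrm (|x| - k)) ≤ nrm (|x| + s • k) := by
        simpa only [nrm_abs hmono] using le_nrm_add_smul hhom hadd |x| k hs₀
    _ ≤ _ := hmono _ _ fun a => by
        simp only [Pi.add_apply, Pi.smul_apply, Pi.abs_apply, smul_eq_mul]
        rw [abs_of_nonneg (add_nonneg (abs_nonneg _) (mul_nonneg hs₀ (hk₀ a))),
          abs_of_nonneg (Real.sqrt_nonneg _)]
        calc |x a| + s * k a ≤ |x a| + s * (√(x a ^ 2 + y a ^ 2) - |x a|) := by
              gcongr; exact min_le_right _ _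
          _ ≤ _ := abs_add_mul_sqrt_sub_abs_le_sqrt _ _ hs₀ hs₁

/-- In an exactly `r`-convex Banach function space with strictly monotone norm
(`r > 2`), the condition `D_r` (for all `t ∈ [0,1]`,
`‖x + ty‖^r + ‖x − ty‖^r ≤ 2(‖x‖^r + t^r‖y‖^r)`) forces `x` and `y` to be disjoint. -/
theorem stmt12 {α : Type*} (X : Submodule ℝ (α → ℝ)) (nrm : (α → ℝ) → ℝ) (r : ℝ)
    (hr : 2 < r)
    (hnonneg : ∀ f : α → ℝ, 0 ≤ nrm f)
    (hmono : ∀ f g : α → ℝ, (∀ a, |f a| ≤ |g a|) → nrm f ≤ nrm g)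
    (hhom : ∀ (c : ℝ) (f : α → ℝ), nrm (c • f) = |c| * nrm f)
    (hadd : ∀ f g : α → ℝ, nrm (f + g) ≤ nrm f + nrm g)
    (hstrict : ∀ u v : α → ℝ, (∀ a, 0 ≤ u a) → (∀ a, u a ≤ v a) → nrm u = nrm v → u = v)
    (hconv : ∀ x ∈ X, ∀ y ∈ X,
      nrm (fun a => (|x a| ^ r + |y a| ^ r) ^ r⁻¹) ≤ (nrm x ^ r + nrm y ^ r) ^ r⁻¹)
    (x y : α → ℝ) (hx : x ∈ X) (hy : y ∈ X)
    (hD : ∀ t ∈ Set.Icc (0 : ℝ) 1,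
      nrm (x + t • y) ^ r + nrm (x - t • y) ^ r
        ≤ 2 * (nrm x ^ r + t ^ r * nrm y ^ r)) :
    ∀ a, min |x a| |y a| = 0 := by
  by_contra! ⟨a₀, ha₀⟩
  have hx₀ : x a₀ ≠ 0 := fun h => ha₀ (by simp [h])
  have hy₀ : y a₀ ≠ 0 := fun h => ha₀ (by simp [h])
  obtain ⟨c, ⟨hc, hcx⟩, hlow⟩ :=
    exists_nrm_add_mul_le_nrm_sqrt hnonneg hmono hhom hadd hstrict hx₀ hy₀
  have key : ∀ t, 0 < t → t ≤ 1 → (nrm x + t ^ 2 * c) ^ r ≤ nrm x ^ r + t ^ r * nrm y ^ r := by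
    intro t ht₀ ht₁
    have hup := (two_mul_nrm_sqrt_rpow_le X nrm hr.le hnonneg hmono hhom hconv hx
      (X.smul_mem t hy)).trans (hD t ⟨ht₀.le, ht₁⟩)
    have hlow' : nrm x + t ^ 2 * c ≤ nrm (fun a => √(x a ^ 2 + (t • y) a ^ 2)) := by
      simpa only [Pi.smul_apply, smul_eq_mul, mul_pow] using
        hlow (t ^ 2) (sq_nonneg t) (pow_le_one₀ ht₀.le ht₁)
    calc (nrm x + t ^ 2 * c) ^ r ≤ nrm (fun a => √(x a ^ 2 + (t • y) a ^ 2)) ^ r :=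
          Real.rpow_le_rpow (add_nonneg (hnonneg x) (by positivity)) hlow' (by positivity)
      _ ≤ _ := by linarith
  obtain ⟨t, ht₀, ht₁, hlt⟩ := exists_rpow_add_lt_rpow_add_sq hr (hc.trans_le hcx) hc (nrm y)
  exact hlt.not_ge (key t ht₀ ht₁)
end

section
/- Let U be a countably incomplete ultrafilter on an index set I and E a Banach lattice. If the ultrapower E_U contains a sequence (ξ_n) of normalized, positive, pairwise disjoint vectors equivalent to the unit vector basis of c₀ (in particular sup_n ‖ξ₁ + ⋯ + ξ_n‖ < ∞), then there exists a positive element ξ ∈ E_U with ξ ≥ ξ_n for all n; consequently E_U is not order continuous. -/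
open Filter Finset

/-!
Countable incompleteness of `U` yields a length function `m : I → ℕ` tending to infinity along `U`
such that the partial sum `x 0 i + ⋯ + x (m i - 1) i` stays below the uniform bound `C`. That partial
sum is the dominating family `ξ`: it is bounded and positive, and since eventually `n < m i`,
it eventually dominates `x n i` term by term.
-/

/-- The first index `n` with `i ∉ S n` tends to infinity along `f`. -/
theorem Filter.exists_tendsto_atTop_forall_lt_mem_of_iInter_eq_empty {I : Type*} {f : Filter I}
    {S : ℕ → Set I} (hS : ∀ n, S n ∈ f) (hempty : ⋂ n, S n = ∅) :
    ∃ m : I → ℕ, Tendsto m f atTop ∧ ∀ i k, k < m i → i ∈ S k := by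
  classical
  have hexit : ∀ i, ∃ n, i ∉ S n := Set.iInter_eq_empty_iff.1 hempty
  refine ⟨fun i => Nat.find (hexit i), tendsto_atTop.2 fun n => ?_,
    fun i k hk => not_not.1 (Nat.find_min (hexit i) hk)⟩
  filter_upwards [(biInter_finset_mem (range n)).2 fun k _ => hS k] with i hi
  rw [Nat.le_find_iff]
  exact fun k hk => not_not.2 (Set.mem_iInter₂.1 hi k (mem_range.2 hk))

theorem stmt18_general {I E : Type*} [NormedAddCommGroup E] [Lattice E]
    [CovariantClass E E (· + ·) (· ≤ ·)]
    (U : Ultrafilter I)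
    (hU : ∃ V : ℕ → Set I, (∀ n, V n ∈ U) ∧ (∀ n, V (n + 1) ⊆ V n) ∧ (⋂ n, V n) = ∅)
    (x : ℕ → I → E)
    (hpos : ∀ n i, 0 ≤ x n i)
    (hC : ∃ C : ℝ, ∀ n, ∀ᶠ i in ↑U, ‖∑ k ∈ Finset.range n, x k i‖ ≤ C) :
    ∃ ξ : I → E, (∃ B : ℝ, ∀ i, ‖ξ i‖ ≤ B) ∧ (∀ i, 0 ≤ ξ i) ∧
      ∀ n, Tendsto (fun i => ‖(x n i - ξ i) ⊔ 0‖) ↑U (nhds 0) := by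
  obtain ⟨V, hVU, -, hVempty⟩ := hU
  obtain ⟨C, hC⟩ := hC
  obtain ⟨m, hm, hmem⟩ :=
    exists_tendsto_atTop_forall_lt_mem_of_iInter_eq_empty
      (S := fun n => V n ∩ {i | ‖∑ k ∈ range (n + 1), x k i‖ ≤ C})
      (fun n => inter_mem (hVU n) (hC (n + 1)))
      (Set.subset_empty_iff.1 (hVempty ▸ Set.iInter_mono fun _ => Set.inter_subset_left))
  refine ⟨fun i => ∑ k ∈ range (m i), x k i, ⟨max C 0, fun i => ?_⟩,
    fun i => sum_nonneg fun k _ => hpos k i, fun n => ?_⟩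
  · show ‖∑ k ∈ range (m i), x k i‖ ≤ max C 0
    cases h : m i with
    | zero => simp
    | succ j => exact le_max_of_le_left (hmem i j (h ▸ j.lt_add_one)).2
  · refine tendsto_const_nhds.congr' ?_
    filter_upwards [hm.eventually_gt_atTop n] with i hi
    rw [sup_eq_right.2 (sub_nonpos.2 (single_le_sum (fun k _ => hpos k i) (mem_range.2 hi))),
      norm_zero]

/-- Let `U` be a countably incomplete ultrafilter on `I` and `E` a Banach lattice.
If the ultrapower `E_U` contains a sequence of normalized, positive, pairwise
disjoint vectors whose partial sums are norm bounded (as for the unit basis of `c₀`),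
then there is a positive element of `E_U` dominating all of them.  Here elements of
`E_U` are encoded by bounded families `I → E`; `[x] ≤ [ξ]` means
`‖(x i − ξ i)⁺‖ → 0` along `U`. -/
theorem stmt18 {I E : Type*} [NormedAddCommGroup E] [Lattice E] [Module ℝ E]
    [CovariantClass E E (· + ·) (· ≤ ·)]
    (U : Ultrafilter I)
    (hU : ∃ V : ℕ → Set I, (∀ n, V n ∈ U) ∧ (∀ n, V (n + 1) ⊆ V n) ∧ (⋂ n, V n) = ∅)
    (x : ℕ → I → E)
    (hbd : ∀ n, ∃ B : ℝ, ∀ i, ‖x n i‖ ≤ B)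
    (hpos : ∀ n i, 0 ≤ x n i)
    (hnorm : ∀ n, Tendsto (fun i => ‖x n i‖) ↑U (nhds 1))
    (hdisj : ∀ m n, m ≠ n → Tendsto (fun i => ‖x m i ⊓ x n i‖) ↑U (nhds 0))
    (hC : ∃ C : ℝ, ∀ n, ∀ᶠ i in ↑U, ‖∑ k ∈ Finset.range n, x k i‖ ≤ C) :
    ∃ ξ : I → E, (∃ B : ℝ, ∀ i, ‖ξ i‖ ≤ B) ∧ (∀ i, 0 ≤ ξ i) ∧
      ∀ n, Tendsto (fun i => ‖(x n i - ξ i) ⊔ 0‖) ↑U (nhds 0) :=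
  stmt18_general U hU x hpos hC
end

section
/- Let E be a real Banach space with a complexification E_ℂ = E + iE carrying the complex-lattice modulus (computed, e.g., pointwise in a Banach function space realization). For every x = a + ib ∈ E_ℂ with a, b ∈ E and every t ∈ ℝ with |t| < 1, one has |x| + t a ≤ | |x| + t x | ≤ (1 + t²/(1−|t|)²)^{1/2} (|x| + t a); consequently (1/t)(| |x| + t x | − |x|) converges in norm to a = Re x as t → 0⁺. -/
open Filter Topology

/-!
Write `w = |x| + t x`, so that `Re w = |x| + t a` and `Im w = t b`. Since `|a|, |b| ≤ |x|`, we have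
`Re w ≥ (1 - |t|) |x|`, hence `|Im w| ≤ (|t| / (1 - |t|)) Re w`, and a complex number whose imaginary
part is at most `c` times its real part has modulus at most `√(1 + c²)` times its real part.
For `0 < t < 1`, `√(1 + c²) ≤ 1 + c²/2` then squeezes the difference quotient
`t⁻¹ (|w| - |x|) - a` pointwise between `0` and `t / (1 - t)² · |x|`, and monotonicity and homogeneity
of the norm turn this into norm convergence.
-/

namespace Complex

theorem norm_le_sqrt_one_add_sq_mul_re {w : ℂ} {c : ℝ} (hre : 0 ≤ w.re)
    (him : |w.im| ≤ c * w.re) : ‖w‖ ≤ √(1 + c ^ 2) * w.re := by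
  have him_sq : w.im ^ 2 ≤ (c * w.re) ^ 2 := sq_le_sq' (abs_le.mp him).1 (abs_le.mp him).2
  rw [← Real.sqrt_sq hre, ← Real.sqrt_mul (by positivity), norm_def, normSq_apply]
  exact Real.sqrt_le_sqrt (by nlinarith)

variable (z : ℂ) (t : ℝ)

theorem re_ofReal_norm_add_mul : ((‖z‖ : ℂ) + t * z).re = ‖z‖ + t * z.re := by simp

theorem im_ofReal_norm_add_mul : ((‖z‖ : ℂ) + t * z).im = t * z.im := by simp

theorem one_sub_abs_mul_norm_le : (1 - |t|) * ‖z‖ ≤ ‖z‖ + t * z.re := by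
  have : |t * z.re| ≤ |t| * ‖z‖ := by
    rw [abs_mul]
    exact mul_le_mul_of_nonneg_left (abs_re_le_norm z) (abs_nonneg t)
  linarith [neg_abs_le (t * z.re)]

theorem norm_add_mul_re_le_norm_ofReal_norm_add_mul :
    ‖z‖ + t * z.re ≤ ‖(‖z‖ : ℂ) + t * z‖ := by
  simpa only [re_ofReal_norm_add_mul] using re_le_norm ((‖z‖ : ℂ) + t * z)

theorem norm_ofReal_norm_add_mul_le {t : ℝ} (ht : |t| < 1) :
    ‖(‖z‖ : ℂ) + t * z‖ ≤ √(1 + t ^ 2 / (1 - |t|) ^ 2) * (‖z‖ + t * z.re) := by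
  have hgap : 0 < 1 - |t| := by linarith
  have hre : (1 - |t|) * ‖z‖ ≤ ‖z‖ + t * z.re := one_sub_abs_mul_norm_le z t
  have him : |t * z.im| ≤ |t| / (1 - |t|) * (‖z‖ + t * z.re) := by
    calc |t * z.im| ≤ |t| * ‖z‖ := by
          rw [abs_mul]; exact mul_le_mul_of_nonneg_left (abs_im_le_norm z) (abs_nonneg t)
      _ = |t| / (1 - |t|) * ((1 - |t|) * ‖z‖) := by field_simp
      _ ≤ |t| / (1 - |t|) * (‖z‖ + t * z.re) := by gcongr
  have := norm_le_sqrt_one_add_sq_mul_re (w := (‖z‖ : ℂ) + t * z) (c := |t| / (1 - |t|))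
  rw [re_ofReal_norm_add_mul, im_ofReal_norm_add_mul, div_pow, sq_abs] at this
  exact this (hre.trans' (by positivity)) him

theorem abs_inv_mul_sub_re_le {t : ℝ} (ht₀ : 0 < t) (ht₁ : t < 1) :
    |t⁻¹ * (‖(‖z‖ : ℂ) + t * z‖ - ‖z‖) - z.re| ≤ t / (1 - t) ^ 2 * ‖z‖ := by
  have ht : |t| = t := abs_of_pos ht₀
  set p := ‖z‖ + t * z.re
  set c := t ^ 2 / (1 - t) ^ 2
  have hp₀ : 0 ≤ p := by
    have := one_sub_abs_mul_norm_le z t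
    rw [ht] at this
    exact (mul_nonneg (by linarith) (norm_nonneg z)).trans this
  have hp : p ≤ 2 * ‖z‖ := by
    nlinarith [mul_le_mul_of_nonneg_left (re_le_norm z) ht₀.le, norm_nonneg z]
  have hlower : p ≤ ‖(‖z‖ : ℂ) + t * z‖ := norm_add_mul_re_le_norm_ofReal_norm_add_mul z t
  have hupper : ‖(‖z‖ : ℂ) + t * z‖ ≤ p + c * ‖z‖ := by
    calc ‖(‖z‖ : ℂ) + t * z‖ ≤ √(1 + c) * p := by
          simpa only [ht] using norm_ofReal_norm_add_mul_le z (t := t) (by rwa [ht])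
      _ ≤ (1 + c / 2) * p := by
          gcongr; exact Real.sqrt_one_add_le (by linarith [show 0 ≤ c by positivity])
      _ ≤ p + c * ‖z‖ := by nlinarith [show 0 ≤ c by positivity]
  have hquot : t⁻¹ * (‖(‖z‖ : ℂ) + t * z‖ - ‖z‖) - z.re = (‖(‖z‖ : ℂ) + t * z‖ - p) / t := by
    field_simp; ring
  have hc : c * ‖z‖ / t = t / (1 - t) ^ 2 * ‖z‖ := by simp only [c]; field_simp
  rw [hquot, abs_of_nonneg (div_nonneg (by linarith) ht₀.le), ← hc]
  gcongr
  linarith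

end Complex

section MonotoneHomogeneousNorm

variable {α : Type*} {nrm : (α → ℝ) → ℝ}
  (hmono : ∀ f g : α → ℝ, (∀ i, |f i| ≤ |g i|) → nrm f ≤ nrm g)
  (hsmul : ∀ (c : ℝ) (f : α → ℝ), nrm (c • f) = |c| * nrm f)
include hmono hsmul

theorem nrm_nonneg (f : α → ℝ) : 0 ≤ nrm f := by
  have h0 : nrm 0 = 0 := by simpa using hsmul 0 0
  exact h0 ▸ hmono 0 f (by simp)

theorem nrm_le_abs_mul_of_abs_le {f g : α → ℝ} {c : ℝ} (h : ∀ i, |f i| ≤ c * |g i|) :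
    nrm f ≤ |c| * nrm g := by
  rw [← hsmul]
  refine hmono _ _ fun i => (h i).trans ?_
  rw [Pi.smul_apply, smul_eq_mul, abs_mul]
  exact mul_le_mul_of_nonneg_right (le_abs_self c) (abs_nonneg _)

theorem tendsto_nrm_zero_of_abs_le {β : Type*} {l : Filter β} {F : β → α → ℝ} {φ : β → ℝ}
    {g : α → ℝ} (hφ : Tendsto φ l (𝓝 0)) (hF : ∀ᶠ s in l, ∀ i, |F s i| ≤ φ s * |g i|) :
    Tendsto (fun s => nrm (F s)) l (𝓝 0) := by
  have hbound : Tendsto (fun s => |φ s| * nrm g) l (𝓝 0) := by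
    simpa using hφ.abs.mul_const (nrm g)
  refine squeeze_zero' (Eventually.of_forall fun s => nrm_nonneg hmono hsmul (F s)) ?_ hbound
  filter_upwards [hF] with s hs
  exact nrm_le_abs_mul_of_abs_le hmono hsmul hs

end MonotoneHomogeneousNorm

theorem stmt19_general {α : Type*} (nrm : (α → ℝ) → ℝ)
    (hmono : ∀ f g : α → ℝ, (∀ i, |f i| ≤ |g i|) → nrm f ≤ nrm g)
    (hsmul : ∀ (c : ℝ) (f : α → ℝ), nrm (c • f) = |c| * nrm f)
    (x : α → ℂ) :
    (∀ t : ℝ, |t| < 1 → ∀ i,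
      ‖x i‖ + t * (x i).re
          ≤ ‖(‖x i‖ : ℂ) + t * x i‖ ∧
      ‖(‖x i‖ : ℂ) + t * x i‖
          ≤ Real.sqrt (1 + t ^ 2 / (1 - |t|) ^ 2) * (‖x i‖ + t * (x i).re))
    ∧ Tendsto
        (fun t : ℝ => nrm (fun i =>
          t⁻¹ * (‖(‖x i‖ : ℂ) + t * x i‖ - ‖x i‖)
            - (x i).re))
        (nhdsWithin 0 (Set.Ioi 0)) (nhds 0) := by
  refine ⟨fun t ht i => ⟨Complex.norm_add_mul_re_le_norm_ofReal_norm_add_mul (x i) t,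
    Complex.norm_ofReal_norm_add_mul_le (x i) ht⟩, ?_⟩
  have hφ : Tendsto (fun t : ℝ => t / (1 - t) ^ 2) (𝓝[>] 0) (𝓝 0) := by
    have : ContinuousAt (fun t : ℝ => t / (1 - t) ^ 2) 0 :=
      continuousAt_id.div (by fun_prop) (by norm_num)
    simpa using this.tendsto.mono_left nhdsWithin_le_nhds
  refine tendsto_nrm_zero_of_abs_le hmono hsmul (g := fun i => ‖x i‖) hφ ?_
  filter_upwards [Ioo_mem_nhdsGT (show (0 : ℝ) < 1 by norm_num)] with t ht i
  rw [abs_norm]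
  exact Complex.abs_inv_mul_sub_re_le (x i) ht.1 ht.2

/-- In a complex Banach function space (pointwise modulus, with a monotone,
subadditive, homogeneous norm `nrm` on real functions), for `x = a + ib` and `|t| < 1`,
`|x| + t a ≤ ||x| + t x| ≤ (1 + t²/(1−|t|)²)^{1/2} (|x| + t a)` pointwise; consequently
`(1/t)(||x| + t x| − |x|) → Re x` in norm as `t → 0⁺`. -/
theorem stmt19 {α : Type*} (nrm : (α → ℝ) → ℝ)
    (hmono : ∀ f g : α → ℝ, (∀ i, |f i| ≤ |g i|) → nrm f ≤ nrm g)
    (hadd : ∀ f g : α → ℝ, nrm (f + g) ≤ nrm f + nrm g)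
    (hsmul : ∀ (c : ℝ) (f : α → ℝ), nrm (c • f) = |c| * nrm f)
    (x : α → ℂ) :
    (∀ t : ℝ, |t| < 1 → ∀ i,
      ‖x i‖ + t * (x i).re
          ≤ ‖(‖x i‖ : ℂ) + t * x i‖ ∧
      ‖(‖x i‖ : ℂ) + t * x i‖
          ≤ Real.sqrt (1 + t ^ 2 / (1 - |t|) ^ 2) * (‖x i‖ + t * (x i).re))
    ∧ Tendsto
        (fun t : ℝ => nrm (fun i =>
          t⁻¹ * (‖(‖x i‖ : ℂ) + t * x i‖ - ‖x i‖)
            - (x i).re))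
        (nhdsWithin 0 (Set.Ioi 0)) (nhds 0) :=
  stmt19_general nrm hmono hsmul x
end
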